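/- arXiv:1606.00817 — 2 statements merged into one kernel-verified Lean document; each statement's English description precedes it below -/
import Mathlib

section
/- Let A and B be d×d complex matrices with singular value decompositions A = U₁S₁V₁† and B = U₂S₂V₂†, where S₁ and S₂ are diagonal with the singular values in decreasing order and U₁, U₂, V₁, V₂ are unitary. Then choosing W = U₁U₂† achieves equality in the bound, i.e. ‖A†WB‖_* = Σ_{i=1}^{d} σ_i(A)·σ_i(B). -/
open Matrix
open scoped ComplexOrder

/-- The trace norm (nuclear norm) of a complex matrix: the trace of `√(Mᴴ M)`,
which equals the sum of the singular values of `M`. -/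
noncomputable def traceNorm {n : Type*} [Fintype n] [DecidableEq n]
    (M : Matrix n n ℂ) : ℝ :=
  (((Matrix.posSemidef_conjTranspose_mul_self M).1.eigenvectorUnitary.1 *
      diagonal (((↑) : ℝ → ℂ) ∘ (√·) ∘ (Matrix.posSemidef_conjTranspose_mul_self M).1.eigenvalues) *
      (star (Matrix.posSemidef_conjTranspose_mul_self M).1.eigenvectorUnitary :
        Matrix n n ℂ)).trace).re

/-- The singular values of a `d × d` complex matrix, listed in decreasing order:
the square roots of the eigenvalues of `Mᴴ M`, sorted descending. -/
noncomputable def singularValues {d : ℕ} (M : Matrix (Fin d) (Fin d) ℂ) : Fin d → ℝ :=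
  fun i =>
    Real.sqrt
      (((List.ofFn ((Matrix.isHermitian_conjTranspose_mul_self M).eigenvalues)).insertionSort
          (· ≥ ·)).get
        ⟨i.1, by rw [List.length_insertionSort, List.length_ofFn]; exact i.2⟩)

/-!
Substituting the decompositions, the unitaries `U₁` and `U₂` cancel, so
`M := Aᴴ (U₁ U₂ᴴ) B = V₁ Σ V₂ᴴ` with `Σ = diag(σᵢ(A) σᵢ(B)) ≥ 0`. Then `V₂ Σ V₂ᴴ` is a positive
semidefinite square root of `Mᴴ M`; by uniqueness of such square roots it is `√(Mᴴ M)`, and its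
trace is `∑ᵢ σᵢ(A) σᵢ(B)`.
-/

section

open scoped MatrixOrder

variable {n : Type*} [Fintype n] [DecidableEq n]

lemma traceNorm_eq_re_trace_sqrt (M : Matrix n n ℂ) :
    traceNorm M = (CFC.sqrt (Mᴴ * M)).trace.re := by
  have hM := posSemidef_conjTranspose_mul_self M
  rw [CFC.sqrt_eq_cfc, cfc_nnreal_eq_real _ _ hM.nonneg, hM.1.cfc_eq]
  simp only [traceNorm, IsHermitian.cfc, Unitary.conjStarAlgAut_apply]
  -- the `ℝ≥0` calculus evaluates `√(max x 0)`, which equals `√x` because `√` vanishes on `x ≤ 0`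
  congr
  funext x
  rcases le_total 0 x with h | h <;> simp [h, Real.sqrt_eq_zero']

lemma traceNorm_eq_re_trace_of_mul_self_eq {M N : Matrix n n ℂ} (hN : N.PosSemidef)
    (h : N * N = Mᴴ * M) : traceNorm M = N.trace.re := by
  rw [traceNorm_eq_re_trace_sqrt, CFC.sqrt_unique h hN.nonneg]

lemma traceNorm_mul_diagonal_mul_conjTranspose {V W : Matrix n n ℂ}
    (hV : V ∈ unitaryGroup n ℂ) (hW : W ∈ unitaryGroup n ℂ) {s : n → ℝ} (hs : 0 ≤ s) :
    traceNorm (V * diagonal (fun i => (s i : ℂ)) * Wᴴ) = ∑ i, s i := by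
  set D := diagonal (fun i => (s i : ℂ))
  have hV' : Vᴴ * V = 1 := mem_unitaryGroup_iff'.mp hV
  have hW' : Wᴴ * W = 1 := mem_unitaryGroup_iff'.mp hW
  have hD : D.PosSemidef := posSemidef_diagonal_iff.mpr fun i => by exact_mod_cast hs i
  have hDh : Dᴴ = D := hD.isHermitian
  rw [traceNorm_eq_re_trace_of_mul_self_eq (hD.mul_mul_conjTranspose_same W)]
  · rw [trace_mul_cycle, hW', one_mul, trace_diagonal, ← Complex.ofReal_sum, Complex.ofReal_re]
  · simp only [conjTranspose_mul, conjTranspose_conjTranspose, hDh, Matrix.mul_assoc]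
    rw [← Matrix.mul_assoc Wᴴ W, hW', Matrix.one_mul, ← Matrix.mul_assoc Vᴴ V, hV', Matrix.one_mul]

lemma conjTranspose_mul_unitary_mul_eq_of_svd {U₁ U₂ : Matrix n n ℂ}
    (hU₁ : U₁ ∈ unitaryGroup n ℂ) (hU₂ : U₂ ∈ unitaryGroup n ℂ) (V₁ V₂ : Matrix n n ℂ)
    (s t : n → ℝ) :
    (U₁ * diagonal (fun i => (s i : ℂ)) * V₁ᴴ)ᴴ * (U₁ * U₂ᴴ) *
        (U₂ * diagonal (fun i => (t i : ℂ)) * V₂ᴴ) =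
      V₁ * diagonal (fun i => ((s i * t i : ℝ) : ℂ)) * V₂ᴴ := by
  have hU₁' : U₁ᴴ * U₁ = 1 := mem_unitaryGroup_iff'.mp hU₁
  have hU₂' : U₂ᴴ * U₂ = 1 := mem_unitaryGroup_iff'.mp hU₂
  simp only [conjTranspose_mul, conjTranspose_conjTranspose, diagonal_conjTranspose,
    Matrix.mul_assoc]
  rw [← Matrix.mul_assoc U₁ᴴ U₁, hU₁', Matrix.one_mul, ← Matrix.mul_assoc U₂ᴴ U₂, hU₂',
    Matrix.one_mul, ← Matrix.mul_assoc (diagonal _), diagonal_mul_diagonal]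
  simp

end

/-- Given singular value decompositions `A = U₁ S₁ V₁ᴴ` and `B = U₂ S₂ V₂ᴴ` (with `S₁`, `S₂`
diagonal carrying the singular values in decreasing order, and `U₁, U₂, V₁, V₂` unitary),
the choice `W = U₁ U₂ᴴ` achieves equality in the bound:
`‖Aᴴ W B‖_* = ∑ i, σ_i(A) σ_i(B)`. -/
theorem traceNorm_conjTranspose_mul_unitary_mul_eq_of_svd {d : ℕ}
    (A B U₁ U₂ V₁ V₂ : Matrix (Fin d) (Fin d) ℂ)
    (hU₁ : U₁ ∈ Matrix.unitaryGroup (Fin d) ℂ)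
    (hU₂ : U₂ ∈ Matrix.unitaryGroup (Fin d) ℂ)
    (hV₁ : V₁ ∈ Matrix.unitaryGroup (Fin d) ℂ)
    (hV₂ : V₂ ∈ Matrix.unitaryGroup (Fin d) ℂ)
    (hA : A = U₁ * Matrix.diagonal (fun i => (singularValues A i : ℂ)) * V₁ᴴ)
    (hB : B = U₂ * Matrix.diagonal (fun i => (singularValues B i : ℂ)) * V₂ᴴ) :
    traceNorm (Aᴴ * (U₁ * U₂ᴴ) * B) = ∑ i, singularValues A i * singularValues B i := by
  have hprod := conjTranspose_mul_unitary_mul_eq_of_svd hU₁ hU₂ V₁ V₂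
    (singularValues A) (singularValues B)
  rw [← hA, ← hB] at hprod
  have hσ : 0 ≤ fun i => singularValues A i * singularValues B i :=
    fun i => mul_nonneg (Real.sqrt_nonneg _) (Real.sqrt_nonneg _)
  rw [hprod, traceNorm_mul_diagonal_mul_conjTranspose hV₁ hV₂ hσ]
end

section
/- Let (M₁, M₂) and (N₁, N₂) be two-outcome POVMs on ℂ^d. Then the stabilized (diamond-norm) distinguishability of the two associated POVM channels equals the unstabilized one: sup over D ≥ 1 and over density matrices ρ_SA on ℂ^d ⊗ ℂ^D of (1/2)(‖T₁(ρ_SA)‖_* + ‖T₂(ρ_SA)‖_*) equals sup over density matrices ρ_S on ℂ^d of |Tr[(M₁ − N₁)ρ_S]|, and both equal max_k |λ_k(M₁ − N₁)|. In particular, no ancilla is required for optimal discrimination of two-outcome POVM channels. -/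
open Matrix
open scoped ComplexOrder

/-- `partialTraceS X ρ = Tr_S[(X ⊗ I) ρ]`: the `D × D` matrix with entries
`(T)_{ab} = ∑ i j, X_{ji} ρ_{(i,a),(j,b)}`, the partial trace over the system factor. -/
noncomputable def partialTraceS {d D : ℕ} (X : Matrix (Fin d) (Fin d) ℂ)
    (ρ : Matrix (Fin d × Fin D) (Fin d × Fin D) ℂ) : Matrix (Fin D) (Fin D) ℂ :=
  Matrix.of fun a b => ∑ i, ∑ j, X j i * ρ (i, a) (j, b)

/-!
Put `Δ = M₁ - N₁`; then `M₂ - N₂ = -Δ`, so the two trace norms in the stabilized quantity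
coincide. If `r` bounds the moduli of the eigenvalues of `Δ`, then `-r ≤ Δ ≤ r` in the Loewner
order. The map `X ↦ Tr_S[(X ⊗ I) ρ]` is positive, so `T = Tr_S[(Δ ⊗ I) ρ]` satisfies
`-r ρ_A ≤ T ≤ r ρ_A` with `ρ_A = Tr_S ρ`, and comparing diagonal entries in an eigenbasis of `T`
gives `‖T‖_* ≤ r Tr ρ_A = r`. An eigenvector of `Δ` for an eigenvalue of largest modulus attains
this bound without an ancilla, both for `|Tr[Δ ρ]|` and, with `D = 1`, for `‖T‖_*`.
-/

open scoped MatrixOrder Kronecker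

namespace Matrix

variable {m n n' R : Type*} [Fintype m]

def traceLeft [AddCommMonoid R] (σ : Matrix (m × n) (m × n') R) : Matrix n n' R :=
  of fun a b => ∑ i, σ (i, a) (i, b)

theorem traceLeft_conjTranspose [AddCommMonoid R] [StarAddMonoid R]
    (σ : Matrix (m × n) (m × n') R) : (traceLeft σ)ᴴ = traceLeft σᴴ := by
  ext a b
  simp [traceLeft, star_sum]

theorem trace_traceLeft [Fintype n] [AddCommMonoid R] (σ : Matrix (m × n) (m × n) R) :
    (traceLeft σ).trace = σ.trace := by
  simp only [trace, diag, traceLeft, of_apply, Fintype.sum_prod_type]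
  exact Finset.sum_comm

theorem traceLeft_kronecker_one_mul [Fintype n] [DecidableEq n] [CommSemiring R]
    (A : Matrix m m R) (σ : Matrix (m × n) (m × n) R) :
    traceLeft ((A ⊗ₖ 1) * σ) = traceLeft (σ * (A ⊗ₖ 1)) := by
  ext a b
  simp only [traceLeft, of_apply, mul_apply, kroneckerMap_apply, one_apply, mul_ite, mul_one,
    mul_zero, ite_mul, zero_mul, Fintype.sum_prod_type, Finset.sum_ite_eq, Finset.sum_ite_eq',
    Finset.mem_univ, ↓reduceIte, mul_comm]
  exact Finset.sum_comm

theorem PosSemidef.traceLeft [Fintype n] [CommRing R] [PartialOrder R] [StarRing R]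
    [AddLeftMono R] {σ : Matrix (m × n) (m × n) R} (hσ : σ.PosSemidef) :
    σ.traceLeft.PosSemidef := by
  have hsum : σ.traceLeft = ∑ i, σ.submatrix (Prod.mk i) (Prod.mk i) := by
    ext a b
    simp [Matrix.traceLeft, sum_apply]
  rw [hsum]
  exact posSemidef_sum _ fun i _ => hσ.submatrix _

theorem trace_submatrix_fst {ι : Type*} [Fintype n] [Fintype ι] [Unique ι] [AddCommMonoid R]
    (ρ : Matrix n n R) :
    (ρ.submatrix Prod.fst Prod.fst : Matrix (n × ι) (n × ι) R).trace = ρ.trace := by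
  simp [trace, Fintype.sum_prod_type]

end Matrix

section partialTraceS

variable {d D : ℕ}

theorem partialTraceS_eq_traceLeft (X : Matrix (Fin d) (Fin d) ℂ)
    (ρ : Matrix (Fin d × Fin D) (Fin d × Fin D) ℂ) :
    partialTraceS X ρ = traceLeft ((X ⊗ₖ 1) * ρ) := by
  ext a b
  simp only [partialTraceS, of_apply, traceLeft, mul_apply, kroneckerMap_apply, one_apply,
    mul_ite, mul_one, mul_zero, ite_mul, zero_mul, Fintype.sum_prod_type, Finset.sum_ite_eq,
    Finset.mem_univ, ↓reduceIte]
  exact Finset.sum_comm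

theorem partialTraceS_sub (X Y : Matrix (Fin d) (Fin d) ℂ)
    (ρ : Matrix (Fin d × Fin D) (Fin d × Fin D) ℂ) :
    partialTraceS (X - Y) ρ = partialTraceS X ρ - partialTraceS Y ρ := by
  ext
  simp [partialTraceS, sub_mul, Finset.sum_sub_distrib]

theorem partialTraceS_neg (X : Matrix (Fin d) (Fin d) ℂ)
    (ρ : Matrix (Fin d × Fin D) (Fin d × Fin D) ℂ) :
    partialTraceS (-X) ρ = -partialTraceS X ρ := by
  ext
  simp [partialTraceS]

theorem Matrix.IsHermitian.partialTraceS {X : Matrix (Fin d) (Fin d) ℂ}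
    {ρ : Matrix (Fin d × Fin D) (Fin d × Fin D) ℂ} (hX : X.IsHermitian) (hρ : ρ.IsHermitian) :
    (partialTraceS X ρ).IsHermitian := by
  rw [IsHermitian, partialTraceS_eq_traceLeft, traceLeft_conjTranspose, conjTranspose_mul,
    conjTranspose_kronecker, conjTranspose_one, hX.eq, hρ.eq, traceLeft_kronecker_one_mul]

theorem Matrix.PosSemidef.partialTraceS {X : Matrix (Fin d) (Fin d) ℂ}
    {ρ : Matrix (Fin d × Fin D) (Fin d × Fin D) ℂ} (hX : X.PosSemidef) (hρ : ρ.PosSemidef) :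
    (partialTraceS X ρ).PosSemidef := by
  obtain ⟨B, rfl⟩ := CStarAlgebra.nonneg_iff_eq_star_mul_self.mp hX.nonneg
  have hB : (B ⊗ₖ (1 : Matrix (Fin D) (Fin D) ℂ))ᴴ = Bᴴ ⊗ₖ 1 := by
    rw [conjTranspose_kronecker, conjTranspose_one]
  -- cyclicity of `traceLeft` turns `(Bᴴ B ⊗ 1) ρ` into `(B ⊗ 1) ρ (B ⊗ 1)ᴴ`
  rw [partialTraceS_eq_traceLeft, star_eq_conjTranspose,
    ← mul_one (1 : Matrix (Fin D) (Fin D) ℂ), mul_kronecker_mul, mul_assoc,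
    traceLeft_kronecker_one_mul, ← hB]
  exact (hρ.mul_mul_conjTranspose_same _).traceLeft

theorem partialTraceS_mono {X Y : Matrix (Fin d) (Fin d) ℂ}
    {ρ : Matrix (Fin d × Fin D) (Fin d × Fin D) ℂ} (hXY : X ≤ Y) (hρ : ρ.PosSemidef) :
    partialTraceS X ρ ≤ partialTraceS Y ρ := by
  rw [le_iff, ← partialTraceS_sub]
  exact hXY.partialTraceS hρ

theorem trace_partialTraceS_algebraMap (r : ℝ) (ρ : Matrix (Fin d × Fin D) (Fin d × Fin D) ℂ) :
    (partialTraceS (algebraMap ℝ _ r) ρ).trace = r * ρ.trace := by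
  rw [partialTraceS_eq_traceLeft, trace_traceLeft, Algebra.algebraMap_eq_smul_one,
    smul_kronecker, one_kronecker_one, smul_one_mul, trace_smul]
  simp

theorem partialTraceS_submatrix_fst (X ρ : Matrix (Fin d) (Fin d) ℂ) :
    partialTraceS X (ρ.submatrix Prod.fst Prod.fst : Matrix (Fin d × Fin D) (Fin d × Fin D) ℂ) =
      of fun _ _ => (X * ρ).trace := by
  ext
  simp only [partialTraceS, submatrix_apply, of_apply, trace, diag, mul_apply]
  exact Finset.sum_comm

end partialTraceS

section traceNorm

variable {n : Type*} [Fintype n] [DecidableEq n]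

theorem traceNorm_eq_re_trace_abs (T : Matrix n n ℂ) : traceNorm T = (CFC.abs T).trace.re := by
  have hP := posSemidef_conjTranspose_mul_self T
  rw [CFC.abs, star_eq_conjTranspose, CFC.sqrt_eq_real_sqrt _ hP.nonneg, cfcₙ_eq_cfc,
    hP.1.cfc_eq, IsHermitian.cfc, Unitary.conjStarAlgAut_apply]
  rfl

theorem traceNorm_nonneg (T : Matrix n n ℂ) : 0 ≤ traceNorm T := by
  rw [traceNorm_eq_re_trace_abs]
  exact (Complex.nonneg_iff.mp (CFC.abs_nonneg T).posSemidef.trace_nonneg).1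

theorem traceNorm_neg (T : Matrix n n ℂ) : traceNorm (-T) = traceNorm T := by
  simp only [traceNorm_eq_re_trace_abs, CFC.abs_neg]

theorem traceNorm_of_unique [Unique n] (c : ℂ) : traceNorm (of fun _ _ : n => c) = ‖c‖ := by
  have hc : (of fun _ _ : n => c) = algebraMap ℂ (Matrix n n ℂ) c := by
    ext i j
    simp [algebraMap_matrix_apply, Subsingleton.elim i j]
  rw [traceNorm_eq_re_trace_abs, hc, CFC.abs_algebraMap]
  simp [algebraMap_matrix_apply, trace]

theorem Matrix.IsHermitian.traceNorm_eq_sum_abs_eigenvalues {T : Matrix n n ℂ}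
    (hT : T.IsHermitian) : traceNorm T = ∑ k, |hT.eigenvalues k| := by
  rw [traceNorm_eq_re_trace_abs, CFC.abs_eq_cfc_norm T hT.isSelfAdjoint, hT.cfc_eq,
    IsHermitian.cfc, Unitary.conjStarAlgAut_apply, trace_mul_cycle, Unitary.coe_star_mul_self,
    one_mul, trace_diagonal, Complex.re_sum]
  simp

theorem Matrix.IsHermitian.traceNorm_le_re_trace {T C : Matrix n n ℂ} (hT : T.IsHermitian)
    (h₁ : -C ≤ T) (h₂ : T ≤ C) : traceNorm T ≤ C.trace.re := by
  set U := (hT.eigenvectorUnitary : Matrix n n ℂ)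
  have hdiag : star U * T * U = diagonal (RCLike.ofReal ∘ hT.eigenvalues) := by
    simpa [Unitary.conjStarAlgAut_apply] using hT.conjStarAlgAut_star_eigenvectorUnitary
  have re_apply_mono {A B : Matrix n n ℂ} (h : A ≤ B) (k : n) : (A k k).re ≤ (B k k).re := by
    simpa using (Complex.le_def.mp (h.diag_nonneg (i := k))).1
  have habs (k : n) : |hT.eigenvalues k| ≤ ((star U * C * U) k k).re := by
    have hlo := re_apply_mono (star_left_conjugate_le_conjugate h₁ U) k
    have hhi := re_apply_mono (star_left_conjugate_le_conjugate h₂ U) k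
    simp only [hdiag, mul_neg, neg_mul, neg_apply, Complex.neg_re, diagonal_apply_eq,
      Function.comp_apply] at hlo hhi
    exact abs_le.mpr ⟨by simpa using hlo, by simpa using hhi⟩
  calc traceNorm T = ∑ k, |hT.eigenvalues k| := hT.traceNorm_eq_sum_abs_eigenvalues
    _ ≤ ∑ k, ((star U * C * U) k k).re := Finset.sum_le_sum fun k _ => habs k
    _ = (star U * C * U).trace.re := by simp only [trace, diag_apply, Complex.re_sum]
    _ = C.trace.re := by
      rw [trace_mul_cycle, Unitary.mul_star_self_of_mem hT.eigenvectorUnitary.2, one_mul]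

end traceNorm

namespace Matrix.IsHermitian

variable {n : Type*} [Fintype n] [DecidableEq n] {A : Matrix n n ℂ}

theorem le_algebraMap_iff (hA : A.IsHermitian) {r : ℝ} :
    A ≤ algebraMap ℝ _ r ↔ ∀ k, hA.eigenvalues k ≤ r := by
  rw [le_algebraMap_iff_spectrum_le hA.isSelfAdjoint, hA.spectrum_real_eq_range_eigenvalues,
    Set.forall_mem_range]

theorem algebraMap_le_iff (hA : A.IsHermitian) {r : ℝ} :
    algebraMap ℝ _ r ≤ A ↔ ∀ k, r ≤ hA.eigenvalues k := by
  rw [algebraMap_le_iff_le_spectrum hA.isSelfAdjoint, hA.spectrum_real_eq_range_eigenvalues,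
    Set.forall_mem_range]

theorem exists_trace_mul_eq_eigenvalues (hA : A.IsHermitian) (k : n) :
    ∃ ρ : Matrix n n ℂ, ρ.PosSemidef ∧ ρ.trace = 1 ∧ (A * ρ).trace = hA.eigenvalues k := by
  set v := ⇑(hA.eigenvectorBasis k)
  have hv : v ⬝ᵥ star v = 1 := hA.eigenvectorBasis.inner_eq_one k
  refine ⟨vecMulVec v (star v), posSemidef_vecMulVec_self_star v,
    by rw [trace_vecMulVec, hv], ?_⟩
  rw [mul_vecMulVec, hA.mulVec_eigenvectorBasis, trace_vecMulVec, smul_dotProduct, hv,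
    Complex.real_smul, mul_one]

end Matrix.IsHermitian

theorem traceNorm_partialTraceS_le {d D : ℕ} {X : Matrix (Fin d) (Fin d) ℂ} (hX : X.IsHermitian)
    {r : ℝ} (hr : ∀ k, |hX.eigenvalues k| ≤ r) {ρ : Matrix (Fin d × Fin D) (Fin d × Fin D) ℂ}
    (hρ : ρ.PosSemidef) (htr : ρ.trace = 1) : traceNorm (partialTraceS X ρ) ≤ r := by
  have hlo := partialTraceS_mono (hX.algebraMap_le_iff.mpr fun k => neg_le_of_abs_le (hr k)) hρ
  have hhi := partialTraceS_mono (hX.le_algebraMap_iff.mpr fun k => le_of_abs_le (hr k)) hρ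
  rw [map_neg, partialTraceS_neg] at hlo
  simpa [trace_partialTraceS_algebraMap, htr] using
    (hX.partialTraceS hρ.1).traceNorm_le_re_trace hlo hhi

theorem traceNorm_partialTraceS_submatrix_fst {d : ℕ} (X ρ : Matrix (Fin d) (Fin d) ℂ) :
    traceNorm (partialTraceS X (ρ.submatrix Prod.fst Prod.fst :
      Matrix (Fin d × Fin 1) (Fin d × Fin 1) ℂ)) = ‖(X * ρ).trace‖ := by
  rw [partialTraceS_submatrix_fst, traceNorm_of_unique]

/-- The nonnegativity hypotheses handle empty index types, over which `⨆` is `0`. -/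
theorem Real.iSup_eq_iSup_of_forall_le_of_forall_exists_le {ι κ : Sort*} {f : ι → ℝ}
    {g : κ → ℝ} (hf₀ : ∀ i, 0 ≤ f i) (hg₀ : ∀ k, 0 ≤ g k) (hfg : ∀ i, f i ≤ ⨆ k, g k)
    (hgf : ∀ k, ∃ i, g k ≤ f i) : ⨆ i, f i = ⨆ k, g k := by
  refine le_antisymm (Real.iSup_le hfg (Real.iSup_nonneg hg₀))
    (Real.iSup_le (fun k => ?_) (Real.iSup_nonneg hf₀))
  obtain ⟨i, hi⟩ := hgf k
  exact hi.trans (le_ciSup ⟨_, Set.forall_mem_range.mpr hfg⟩ i)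

section iSup

variable {d : ℕ} {X : Matrix (Fin d) (Fin d) ℂ}

theorem iSup_norm_trace_mul_eq (hX : X.IsHermitian) :
    ⨆ ρ : {ρ : Matrix (Fin d) (Fin d) ℂ // ρ.PosSemidef ∧ ρ.trace = 1}, ‖(X * ρ.1).trace‖ =
      ⨆ k, |hX.eigenvalues k| := by
  have hR (k : Fin d) : |hX.eigenvalues k| ≤ ⨆ k, |hX.eigenvalues k| :=
    le_ciSup (f := fun k => |hX.eigenvalues k|) (Set.finite_range _).bddAbove k
  refine Real.iSup_eq_iSup_of_forall_le_of_forall_exists_le (fun _ => norm_nonneg _)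
    (fun _ => abs_nonneg _) (fun ρ => ?_) fun k => ?_
  · rw [← traceNorm_partialTraceS_submatrix_fst]
    exact traceNorm_partialTraceS_le hX hR (ρ.2.1.submatrix _)
      (by rw [trace_submatrix_fst, ρ.2.2])
  · obtain ⟨ρ, hρ, htr, hk⟩ := hX.exists_trace_mul_eq_eigenvalues k
    exact ⟨⟨ρ, hρ, htr⟩, by rw [hk, Complex.norm_real, Real.norm_eq_abs]⟩

theorem iSup_traceNorm_partialTraceS_eq (hX : X.IsHermitian) :
    ⨆ D : {D : ℕ // 1 ≤ D},
      ⨆ ρ : {ρ : Matrix (Fin d × Fin D.1) (Fin d × Fin D.1) ℂ // ρ.PosSemidef ∧ ρ.trace = 1},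
        traceNorm (partialTraceS X ρ.1) = ⨆ k, |hX.eigenvalues k| := by
  have hR (k : Fin d) : |hX.eigenvalues k| ≤ ⨆ k, |hX.eigenvalues k| :=
    le_ciSup (f := fun k => |hX.eigenvalues k|) (Set.finite_range _).bddAbove k
  have hbound (D : {D : ℕ // 1 ≤ D})
      (ρ : {ρ : Matrix (Fin d × Fin D.1) (Fin d × Fin D.1) ℂ // ρ.PosSemidef ∧ ρ.trace = 1}) :
      traceNorm (partialTraceS X ρ.1) ≤ ⨆ k, |hX.eigenvalues k| :=
    traceNorm_partialTraceS_le hX hR ρ.2.1 ρ.2.2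
  refine Real.iSup_eq_iSup_of_forall_le_of_forall_exists_le
    (fun _ => Real.iSup_nonneg fun _ => traceNorm_nonneg _) (fun _ => abs_nonneg _)
    (fun D => Real.iSup_le (hbound D) (Real.iSup_nonneg fun _ => abs_nonneg _)) fun k => ?_
  obtain ⟨ρ, hρ, htr, hk⟩ := hX.exists_trace_mul_eq_eigenvalues k
  refine ⟨⟨1, le_rfl⟩, le_ciSup_of_le ⟨_, Set.forall_mem_range.mpr (hbound _)⟩
    ⟨ρ.submatrix Prod.fst Prod.fst, hρ.submatrix _, by rw [trace_submatrix_fst, htr]⟩ ?_⟩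
  rw [traceNorm_partialTraceS_submatrix_fst, hk, Complex.norm_real, Real.norm_eq_abs]

end iSup

theorem diamondNorm_povmChannel_eq_unstabilized_general {d : ℕ}
    (M₁ M₂ N₁ N₂ : Matrix (Fin d) (Fin d) ℂ)
    (hM₁ : M₁.PosSemidef) (hMsum : M₁ + M₂ = 1)
    (hN₁ : N₁.PosSemidef) (hNsum : N₁ + N₂ = 1) :
    (⨆ D : {D : ℕ // 1 ≤ D},
      ⨆ ρ : {ρ : Matrix (Fin d × Fin D.1) (Fin d × Fin D.1) ℂ // ρ.PosSemidef ∧ ρ.trace = 1},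
        (1 / 2 : ℝ) * (traceNorm (partialTraceS (M₁ - N₁) ρ.1) +
          traceNorm (partialTraceS (M₂ - N₂) ρ.1))) =
      (⨆ ρ : {ρ : Matrix (Fin d) (Fin d) ℂ // ρ.PosSemidef ∧ ρ.trace = 1},
        ‖((M₁ - N₁) * ρ.1).trace‖) ∧
    (⨆ ρ : {ρ : Matrix (Fin d) (Fin d) ℂ // ρ.PosSemidef ∧ ρ.trace = 1},
        ‖((M₁ - N₁) * ρ.1).trace‖) =
      ⨆ k, |(hM₁.1.sub hN₁.1).eigenvalues k| := by
  have hΔ := hM₁.1.sub hN₁.1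
  have hM₂N₂ : M₂ - N₂ = -(M₁ - N₁) := by
    rw [eq_sub_of_add_eq' hMsum, eq_sub_of_add_eq' hNsum]
    abel
  have half_add_self (t : ℝ) : 1 / 2 * (t + t) = t := by ring
  simp only [hM₂N₂, partialTraceS_neg, traceNorm_neg, half_add_self]
  rw [iSup_traceNorm_partialTraceS_eq hΔ, iSup_norm_trace_mul_eq hΔ]
  exact ⟨rfl, rfl⟩

/-- **Diamond norm of two-outcome POVM channels.** The stabilized (diamond-norm)
distinguishability of two two-outcome POVM channels — the supremum over ancilla dimensions
`D ≥ 1` and density matrices `ρ_SA` on `ℂ^d ⊗ ℂ^D` of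
`(1/2)(‖T₁(ρ_SA)‖_* + ‖T₂(ρ_SA)‖_*)` with `T_μ = Tr_S[((M_μ − N_μ) ⊗ I) ρ_SA]` — equals the
unstabilized one, `sup_{ρ_S} |Tr[(M₁ − N₁)ρ_S]|`, and both equal
`max_k |λ_k(M₁ − N₁)|`: no ancilla is required for optimal discrimination. -/
theorem diamondNorm_povmChannel_eq_unstabilized {d : ℕ}
    (M₁ M₂ N₁ N₂ : Matrix (Fin d) (Fin d) ℂ)
    (hM₁ : M₁.PosSemidef) (hM₂ : M₂.PosSemidef) (hMsum : M₁ + M₂ = 1)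
    (hN₁ : N₁.PosSemidef) (hN₂ : N₂.PosSemidef) (hNsum : N₁ + N₂ = 1) :
    (⨆ D : {D : ℕ // 1 ≤ D},
      ⨆ ρ : {ρ : Matrix (Fin d × Fin D.1) (Fin d × Fin D.1) ℂ // ρ.PosSemidef ∧ ρ.trace = 1},
        (1 / 2 : ℝ) * (traceNorm (partialTraceS (M₁ - N₁) ρ.1) +
          traceNorm (partialTraceS (M₂ - N₂) ρ.1))) =
      (⨆ ρ : {ρ : Matrix (Fin d) (Fin d) ℂ // ρ.PosSemidef ∧ ρ.trace = 1},
        ‖((M₁ - N₁) * ρ.1).trace‖) ∧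
    (⨆ ρ : {ρ : Matrix (Fin d) (Fin d) ℂ // ρ.PosSemidef ∧ ρ.trace = 1},
        ‖((M₁ - N₁) * ρ.1).trace‖) =
      ⨆ k, |(hM₁.1.sub hN₁.1).eigenvalues k| :=
  diamondNorm_povmChannel_eq_unstabilized_general M₁ M₂ N₁ N₂ hM₁ hMsum hN₁ hNsum
end
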